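/- arXiv:2109.03085 — 5 statements merged into one kernel-verified Lean document; each statement's English description precedes it below -/
import Mathlib

section
/- Let λ, μ_d, t > 0 and let b > w be positive integers. Then the polynomial p(x) = λ x^b − (λ + μ_d + 1/t) x^w + μ_d has exactly w roots (counted with multiplicity) in the open unit disk of the complex plane. -/
/-!
Deform the constant term from `0` to `μ_d`, keeping `c = λ + μ_d + 1/t`. For `0 ≤ d ≤ μ_d` and
`|z| = 1` we have `|c z^w| = c > λ + d ≥ |λ z^b + d|`, so no root ever lies on the unit circle.
The roots depend continuously on `d` (root vectors stay bounded, and any limit of root vectors is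
a root vector of the limit polynomial), hence the number of roots in the open disk does not
change along the deformation. At `d = 0` the polynomial is `z^w (λ z^(b-w) - c)`: the root `0`
has multiplicity `w`, and every other root satisfies `|z|^(b-w) = c/λ > 1`.
-/

open Polynomial Filter Topology

theorem eventually_mem_iff_of_notMem_frontier {X : Type*} [TopologicalSpace X] {U : Set X}
    {x : X} (hx : x ∉ frontier U) : ∀ᶠ y in 𝓝 x, (y ∈ U ↔ x ∈ U) := by
  by_cases hxU : x ∈ U
  · filter_upwards [isOpen_interior.mem_nhds ((mem_interior_iff_notMem_frontier hxU).2 hx)]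
      with y hy using iff_of_true (interior_subset hy) hxU
  · have hxc : x ∉ closure U := fun h => hx ⟨h, fun hi => hxU (interior_subset hi)⟩
    filter_upwards [isClosed_closure.isOpen_compl.mem_nhds hxc]
      with y hy using iff_of_false (fun h => hy (subset_closure h)) hxU

theorem Multiset.card_filter_map_eq_of_forall_iff {α ι : Type*} [Fintype ι] {r ρ : ι → α}
    {U : Set α} [DecidablePred (· ∈ U)] (h : ∀ i, r i ∈ U ↔ ρ i ∈ U) :
    card ((Finset.univ.val.map r).filter (· ∈ U)) =
      card ((Finset.univ.val.map ρ).filter (· ∈ U)) := by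
  rw [← countP_eq_card_filter, ← countP_eq_card_filter, countP_map, countP_map,
    filter_congr fun i _ => h i]

namespace Polynomial

theorem roots_C_mul_prod_X_sub_C {R ι : Type*} [CommRing R] [IsDomain R] [Fintype ι] {a : R}
    (ha : a ≠ 0) (r : ι → R) :
    (C a * ∏ i, (X - C (r i))).roots = Finset.univ.val.map r := by
  rw [roots_C_mul _ ha, Finset.prod_eq_multiset_prod]
  simpa [Multiset.map_map, Function.comp_def] using
    roots_multiset_prod_X_sub_C (Finset.univ.val.map r)

theorem exists_eq_C_mul_prod_X_sub_C {K : Type*} [Field K] [IsAlgClosed K] (p : K[X]) {n : ℕ}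
    (hn : p.natDegree = n) : ∃ r : Fin n → K, p = C p.leadingCoeff * ∏ i, (X - C (r i)) := by
  have hsplit := splits_iff_card_roots.1 (IsAlgClosed.splits p)
  have hlen : p.roots.toList.length = n := by rw [Multiset.length_toList, hsplit, hn]
  subst hlen
  refine ⟨p.roots.toList.get, ?_⟩
  have h := C_leadingCoeff_mul_prod_multiset_X_sub_C hsplit
  rw [← Multiset.coe_toList p.roots, ← List.ofFn_get p.roots.toList, ← Fin.univ_val_map,
    Multiset.map_map] at h
  rw [Finset.prod_eq_multiset_prod]
  exact h.symm

theorem IsRoot.norm_le_sum_norm_coeff_div_add_one {K : Type*} [NormedDivisionRing K] {p : K[X]}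
    (hp : p ≠ 0) {z : K} (hz : p.IsRoot z) :
    ‖z‖ ≤ (∑ i ∈ Finset.range p.natDegree, ‖p.coeff i‖) / ‖p.leadingCoeff‖ + 1 := by
  have hsup : (Finset.range p.natDegree).sup (‖p.coeff ·‖₊) ≤
      ∑ i ∈ Finset.range p.natDegree, ‖p.coeff i‖₊ :=
    Finset.sup_le fun i hi =>
      Finset.single_le_sum (f := fun j => ‖p.coeff j‖₊) (fun _ _ => zero_le) hi
  have hcauchy : p.cauchyBound ≤
      (∑ i ∈ Finset.range p.natDegree, ‖p.coeff i‖₊) / ‖p.leadingCoeff‖₊ + 1 := by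
    unfold cauchyBound
    gcongr
  simpa using NNReal.coe_le_coe.2 ((hz.norm_lt_cauchyBound hp).le.trans hcauchy)

theorem eq_C_mul_prod_X_sub_C_of_tendsto {K α ι : Type*} [Field K] [TopologicalSpace K]
    [IsTopologicalRing K] [T2Space K] [Infinite K] [Fintype ι] {l : Filter α} [l.NeBot]
    {p : K[X]} {q : α → K[X]} {a : α → K} {r : α → ι → K} {ρ : ι → K}
    (hq : ∀ k, q k = C (a k) * ∏ i, (X - C (r k i)))
    (heval : ∀ z, Tendsto (fun k => (q k).eval z) l (𝓝 (p.eval z)))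
    (ha : Tendsto a l (𝓝 p.leadingCoeff)) (hr : Tendsto r l (𝓝 ρ)) :
    p = C p.leadingCoeff * ∏ i, (X - C (ρ i)) := by
  refine Polynomial.funext fun z => tendsto_nhds_unique (heval z) ?_
  simp only [hq, eval_mul, eval_C, eval_prod, eval_sub, eval_X]
  exact ha.mul (tendsto_finsetProd _ fun i _ => tendsto_const_nhds.sub (tendsto_pi_nhds.1 hr i))

section Family

variable {T R : Type*} [TopologicalSpace T] {n : ℕ}

theorem continuous_coeff_add_C [Semiring R] [TopologicalSpace R] [ContinuousAdd R] (p : R[X])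
    {f : T → R} (hf : Continuous f) (i : ℕ) : Continuous fun t => (p + C (f t)).coeff i := by
  simp only [coeff_add, coeff_C]
  split_ifs
  · exact continuous_const.add hf
  · exact continuous_const

theorem continuous_eval_of_continuous_coeff [Semiring R] [TopologicalSpace R]
    [IsTopologicalSemiring R] {q : T → R[X]} (hdeg : ∀ t, (q t).natDegree ≤ n)
    (hcoeff : ∀ i, Continuous fun t => (q t).coeff i) (z : R) :
    Continuous fun t => (q t).eval z := by
  simp_rw [fun t => eval_eq_sum_range' (Nat.lt_succ_of_le (hdeg t)) z]
  fun_prop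

theorem exists_eventually_norm_le_of_isRoot [NormedField R] {q : T → R[X]}
    (hdeg : ∀ t, (q t).natDegree = n) (hcoeff : ∀ i, Continuous fun t => (q t).coeff i)
    {t₀ : T} (h₀ : q t₀ ≠ 0) : ∃ B, ∀ᶠ t in 𝓝 t₀, ∀ z, (q t).IsRoot z → ‖z‖ ≤ B := by
  set bound : T → ℝ := fun t => (∑ i ∈ Finset.range n, ‖(q t).coeff i‖) / ‖(q t).coeff n‖ + 1
  have hlead : (q t₀).coeff n ≠ 0 := by
    rw [← hdeg t₀]
    exact leadingCoeff_ne_zero.2 h₀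
  have hbound : ContinuousAt bound t₀ := by
    fun_prop (disch := exact norm_ne_zero_iff.2 hlead)
  refine ⟨bound t₀ + 1, ?_⟩
  filter_upwards [hbound.eventually_lt continuousAt_const (lt_add_one _),
    (hcoeff n).continuousAt.eventually_ne hlead] with t hlt hne z hz
  have hq : q t ≠ 0 := fun h => hne (by simp [h])
  have := hz.norm_le_sum_norm_coeff_div_add_one hq
  rw [hdeg, leadingCoeff, hdeg] at this
  exact this.trans hlt.le

theorem continuousAt_card_roots_filter [FirstCountableTopology T] {q : T → ℂ[X]}
    (hdeg : ∀ t, (q t).natDegree = n) (hq : ∀ t, q t ≠ 0)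
    (hcoeff : ∀ i, Continuous fun t => (q t).coeff i) {U : Set ℂ} [DecidablePred (· ∈ U)]
    {t₀ : T} (ht₀ : ∀ z ∈ (q t₀).roots, z ∉ frontier U) :
    ContinuousAt (fun t => Multiset.card ((q t).roots.filter (· ∈ U))) t₀ := by
  obtain ⟨B, hB⟩ := exists_eventually_norm_le_of_isRoot hdeg hcoeff (hq t₀)
  choose r hr using fun t => exists_eq_C_mul_prod_X_sub_C (q t) (hdeg t)
  have hroots : ∀ t, (q t).roots = Finset.univ.val.map (r t) := fun t => by
    conv_lhs => rw [hr t]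
    exact roots_C_mul_prod_X_sub_C (leadingCoeff_ne_zero.2 (hq t)) _
  rw [ContinuousAt, nhds_discrete ℕ]
  refine tendsto_of_subseq_tendsto fun x hx => ?_
  have hbdd : ∃ᶠ k in atTop, r (x k) ∈ Set.univ.pi fun _ => Metric.closedBall 0 B :=
    (hx.eventually hB).frequently.mono fun k hk i _ => by
      simpa using hk _ (isRoot_of_mem_roots (by
        rw [hroots]
        exact Multiset.mem_map_of_mem _ (Finset.mem_univ i)))
  obtain ⟨ρ, -, φ, hφ, hρ⟩ :=
    (isCompact_univ_pi fun _ => isCompact_closedBall (0 : ℂ) B).tendsto_subseq' hbdd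
  refine ⟨φ, tendsto_pure.2 ?_⟩
  have hxφ : Tendsto (x ∘ φ) atTop (𝓝 t₀) := hx.comp hφ.tendsto_atTop
  have hfactor : q t₀ = C (q t₀).leadingCoeff * ∏ i, (X - C (ρ i)) := by
    refine eq_C_mul_prod_X_sub_C_of_tendsto (fun k => hr (x (φ k))) (fun z =>
      ((continuous_eval_of_continuous_coeff (fun t => (hdeg t).le) hcoeff z).tendsto t₀).comp
        hxφ) ?_ hρ
    simp only [leadingCoeff, hdeg]
    exact ((hcoeff n).tendsto t₀).comp hxφ
  have hroots₀ : (q t₀).roots = Finset.univ.val.map ρ := by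
    conv_lhs => rw [hfactor]
    exact roots_C_mul_prod_X_sub_C (leadingCoeff_ne_zero.2 (hq t₀)) _
  have hside : ∀ᶠ k in atTop, ∀ i, r (x (φ k)) i ∈ U ↔ ρ i ∈ U :=
    eventually_all.2 fun i => (tendsto_pi_nhds.1 hρ i).eventually
      (eventually_mem_iff_of_notMem_frontier (ht₀ _ (by
        rw [hroots₀]
        exact Multiset.mem_map_of_mem _ (Finset.mem_univ i))))
  filter_upwards [hside] with k hk
  rw [hroots, hroots₀]
  exact Multiset.card_filter_map_eq_of_forall_iff hk

theorem card_roots_filter_eq_of_isPreconnected [FirstCountableTopology T] {q : T → ℂ[X]}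
    (hdeg : ∀ t, (q t).natDegree = n) (hq : ∀ t, q t ≠ 0)
    (hcoeff : ∀ i, Continuous fun t => (q t).coeff i) {U : Set ℂ} [DecidablePred (· ∈ U)]
    {s : Set T} (hs : IsPreconnected s)
    (hfrontier : ∀ t ∈ s, ∀ z ∈ (q t).roots, z ∉ frontier U) {t₀ t₁ : T} (h₀ : t₀ ∈ s)
    (h₁ : t₁ ∈ s) :
    Multiset.card ((q t₀).roots.filter (· ∈ U)) = Multiset.card ((q t₁).roots.filter (· ∈ U)) :=
  hs.constant (fun t ht =>
    (continuousAt_card_roots_filter hdeg hq hcoeff (hfrontier t ht)).continuousWithinAt) h₀ h₁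

end Family

section Trinomial

variable {a c d z : ℂ} {b w : ℕ}

theorem natDegree_C_mul_X_pow_sub_C_mul_X_pow_add_C (ha : a ≠ 0) (hwb : w < b) :
    (C a * X ^ b - C c * X ^ w + C d).natDegree = b := by
  compute_degree!
  · simp [ha, hwb.ne', (w.zero_le.trans_lt hwb).ne']
  all_goals omega

theorem norm_ne_one_of_isRoot_C_mul_X_pow_sub_C_mul_X_pow_add_C (h : ‖a‖ + ‖d‖ < ‖c‖)
    (hz : (C a * X ^ b - C c * X ^ w + C d).IsRoot z) : ‖z‖ ≠ 1 := by
  intro hz1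
  have hroot : c * z ^ w = a * z ^ b + d := by
    simp only [IsRoot, eval_add, eval_sub, eval_mul, eval_C, eval_pow, eval_X] at hz
    linear_combination -hz
  have : ‖c‖ ≤ ‖a‖ + ‖d‖ := by
    calc ‖c‖ = ‖c * z ^ w‖ := by simp [hz1]
      _ = ‖a * z ^ b + d‖ := by rw [hroot]
      _ ≤ ‖a‖ + ‖d‖ := by simpa [hz1] using norm_add_le (a * z ^ b) d
  linarith

theorem card_roots_C_mul_X_pow_sub_C_mul_X_pow_filter_norm_lt_one (hac : ‖a‖ < ‖c‖)
    (hwb : w < b) :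
    Multiset.card ((C a * X ^ b - C c * X ^ w).roots.filter (fun z => ‖z‖ < 1)) = w := by
  have hfactor : C a * X ^ b - C c * X ^ w = X ^ w * (C a * X ^ (b - w) - C c) := by
    rw [mul_sub, ← mul_assoc, mul_comm (X ^ w), mul_assoc, ← pow_add, Nat.add_sub_cancel' hwb.le]
    ring
  have hc : c ≠ 0 := norm_pos_iff.1 ((norm_nonneg a).trans_lt hac)
  have hne : C a * X ^ (b - w) - C c ≠ 0 := fun h => hc <| by
    simpa [Nat.sub_ne_zero_of_lt hwb] using congrArg (eval 0) h
  have houter : (C a * X ^ (b - w) - C c).roots.filter (fun z => ‖z‖ < 1) = 0 := by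
    refine Multiset.filter_eq_nil.2 fun z hz hz1 => ?_
    have hroot : a * z ^ (b - w) = c := by
      simpa [sub_eq_zero] using isRoot_of_mem_roots hz
    have : ‖c‖ ≤ ‖a‖ := by
      calc ‖c‖ = ‖a‖ * ‖z‖ ^ (b - w) := by rw [← hroot, norm_mul, norm_pow]
        _ ≤ ‖a‖ := mul_le_of_le_one_right (norm_nonneg a) (pow_le_one₀ (norm_nonneg z) hz1.le)
    linarith
  rw [hfactor, roots_mul (mul_ne_zero (pow_ne_zero _ X_ne_zero) hne), roots_X_pow,
    Multiset.filter_add, houter, Multiset.filter_nsmul]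
  simp [Multiset.filter_singleton]

end Trinomial

end Polynomial

open Complex

theorem stmt0_general (lam mud t : ℝ) (hlam : 0 < lam) (hmud : 0 < mud) (ht : 0 < t)
    (b w : ℕ) (hbw : w < b) :
    Multiset.card
      ((C (lam : ℂ) * X ^ b - C ((lam + mud + 1 / t : ℝ) : ℂ) * X ^ w +
        C ((mud : ℝ) : ℂ)).roots.filter (fun z => ‖z‖ < 1)) = w := by
  set c : ℂ := ((lam + mud + 1 / t : ℝ) : ℂ)
  have hc : lam + mud < ‖c‖ := by
    rw [norm_real, Real.norm_of_nonneg (by positivity)]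
    linarith [one_div_pos.2 ht]
  set q : ℝ → ℂ[X] := fun d => C (lam : ℂ) * X ^ b - C c * X ^ w + C (d : ℂ)
  have hdeg : ∀ d, (q d).natDegree = b := fun d =>
    natDegree_C_mul_X_pow_sub_C_mul_X_pow_add_C (ofReal_ne_zero.2 hlam.ne') hbw
  have hfrontier : ∀ d ∈ Set.Icc 0 mud, ∀ z ∈ (q d).roots, z ∉ frontier {z : ℂ | ‖z‖ < 1} := by
    intro d hd z hz
    rw [← ball_zero_eq, frontier_ball _ one_ne_zero, mem_sphere_zero_iff_norm]
    refine norm_ne_one_of_isRoot_C_mul_X_pow_sub_C_mul_X_pow_add_C ?_ (isRoot_of_mem_roots hz)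
    rw [norm_real, norm_real, Real.norm_of_nonneg hlam.le, Real.norm_of_nonneg hd.1]
    linarith [hd.2]
  calc _ = Multiset.card ((q mud).roots.filter (· ∈ {z : ℂ | ‖z‖ < 1})) := rfl
    _ = Multiset.card ((q 0).roots.filter (· ∈ {z : ℂ | ‖z‖ < 1})) :=
      (card_roots_filter_eq_of_isPreconnected hdeg
        (fun d => ne_zero_of_natDegree_gt ((hdeg d).symm ▸ hbw))
        (fun i => continuous_coeff_add_C _ continuous_ofReal i) isPreconnected_Icc hfrontier
        (Set.left_mem_Icc.2 hmud.le) (Set.right_mem_Icc.2 hmud.le)).symm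
    _ = w := by
      simpa [q] using card_roots_C_mul_X_pow_sub_C_mul_X_pow_filter_norm_lt_one
        (by rw [norm_real, Real.norm_of_nonneg hlam.le]; linarith) hbw

theorem stmt0 (lam mud t : ℝ) (hlam : 0 < lam) (hmud : 0 < mud) (ht : 0 < t)
    (b w : ℕ) (hw : 1 ≤ w) (hbw : w < b) :
    Multiset.card
      ((C (lam : ℂ) * X ^ b - C ((lam + mud + 1 / t : ℝ) : ℂ) * X ^ w +
        C ((mud : ℝ) : ℂ)).roots.filter (fun z => ‖z‖ < 1)) = w :=
  stmt0_general lam mud t hlam hmud ht b w hbw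
end

section
/- Let λ, μ_d, α, β, t > 0 and let R ∈ (0, α) satisfy λ β/(β + R) + μ_d α/(α − R) − (λ + μ_d + 1/t) = 0. Then the function ψ(u) = (1 − R/α) e^{−Ru} satisfies the integral equation λ ∫₀^∞ ψ(u + b) β e^{−βb} db − (λ + μ_d + 1/t) ψ(u) + μ_d ∫₀^u ψ(u − w) α e^{−αw} dw + μ_d e^{−αu} = 0 for all u ≥ 0. -/
open Real MeasureTheory

/-! Both integrals of the exponential ψ are explicit: the upward-jump term is
`C e^{-Ru} β/(β+R)` and the convolution term is `C α (e^{-Ru} - e^{-αu})/(α-R)`. With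
`C = 1 - R/α` the `e^{-αu}` part of the convolution is exactly `-μ_d e^{-αu}`, and what remains
is `C e^{-Ru}` times the Lundberg equation. -/

theorem integral_exp_neg_mul_add_mul_exp_Ioi {R β : ℝ} (h : 0 < β + R) (u : ℝ) :
    ∫ b in Set.Ioi (0 : ℝ), exp (-R * (u + b)) * (β * exp (-β * b))
      = exp (-R * u) * β / (β + R) := by
  have hexp (b : ℝ) : exp (-R * (u + b)) * (β * exp (-β * b))
      = exp (-R * u) * β * exp (-(β + R) * b) := by
    calc _ = β * exp (-R * (u + b) + -β * b) := by rw [exp_add]; ring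
      _ = β * exp (-R * u + -(β + R) * b) := by congr 2; ring
      _ = _ := by rw [exp_add]; ring
  simp_rw [hexp, integral_const_mul, integral_exp_mul_Ioi (neg_neg_of_pos h), mul_zero, exp_zero]
  field_simp

theorem intervalIntegral_exp_neg_mul_sub_mul_exp {R α : ℝ} (h : α ≠ R) (u : ℝ) :
    ∫ w in (0 : ℝ)..u, exp (-R * (u - w)) * (α * exp (-α * w))
      = α * (exp (-R * u) - exp (-α * u)) / (α - R) := by
  have hRα : R - α ≠ 0 := sub_ne_zero.2 h.symm
  have hexp (w : ℝ) : exp (-R * (u - w)) * (α * exp (-α * w))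
      = exp (-R * u) * α * exp ((R - α) * w) := by
    calc _ = α * exp (-R * (u - w) + -α * w) := by rw [exp_add]; ring
      _ = α * exp (-R * u + (R - α) * w) := by congr 2; ring
      _ = _ := by rw [exp_add]; ring
  have hint : ∫ w in (0 : ℝ)..u, exp ((R - α) * w) = (exp ((R - α) * u) - 1) / (R - α) := by
    have := intervalIntegral.mul_integral_comp_mul_left (f := exp) (a := 0) (b := u) (c := R - α)
    rw [integral_exp, mul_zero, exp_zero] at this
    rw [eq_div_iff hRα, mul_comm, this]
  simp_rw [hexp, intervalIntegral.integral_const_mul, hint]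
  rw [show -α * u = -R * u + (R - α) * u by ring, exp_add]
  field_simp
  ring

theorem stmt7_general (lam mud a bet t R : ℝ) (hbet : 0 < bet) (hR : R ∈ Set.Ioo 0 a)
    (hLund : lam * bet / (bet + R) + mud * a / (a - R) - (lam + mud + 1 / t) = 0)
    (psi : ℝ → ℝ) (hpsi : ∀ u : ℝ, psi u = (1 - R / a) * Real.exp (-R * u)) :
    ∀ u : ℝ, 0 ≤ u →
      lam * (∫ b in Set.Ioi (0 : ℝ), psi (u + b) * (bet * Real.exp (-bet * b)))
        - (lam + mud + 1 / t) * psi u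
        + mud * (∫ w in (0 : ℝ)..u, psi (u - w) * (a * Real.exp (-a * w)))
        + mud * Real.exp (-a * u) = 0 := by
  obtain ⟨hR0, hRa⟩ := hR
  obtain rfl : psi = fun u => (1 - R / a) * exp (-R * u) := funext hpsi
  intro u _
  simp only [mul_assoc, integral_const_mul, intervalIntegral.integral_const_mul]
  rw [integral_exp_neg_mul_add_mul_exp_Ioi (by linarith) u,
    intervalIntegral_exp_neg_mul_sub_mul_exp hRa.ne' u]
  have ha : a ≠ 0 := by linarith
  have haR : a - R ≠ 0 := by linarith
  linear_combination (norm := skip) ((1 - R / a) * exp (-R * u)) * hLund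
  field_simp
  ring

theorem stmt7 (lam mud a bet t R : ℝ) (hlam : 0 < lam) (hmud : 0 < mud)
    (ha : 0 < a) (hbet : 0 < bet) (ht : 0 < t) (hR : R ∈ Set.Ioo 0 a)
    (hLund : lam * bet / (bet + R) + mud * a / (a - R) - (lam + mud + 1 / t) = 0)
    (psi : ℝ → ℝ) (hpsi : ∀ u : ℝ, psi u = (1 - R / a) * Real.exp (-R * u)) :
    ∀ u : ℝ, 0 ≤ u →
      lam * (∫ b in Set.Ioi (0 : ℝ), psi (u + b) * (bet * Real.exp (-bet * b)))
        - (lam + mud + 1 / t) * psi u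
        + mud * (∫ w in (0 : ℝ)..u, psi (u - w) * (a * Real.exp (-a * w)))
        + mud * Real.exp (-a * u) = 0 :=
  stmt7_general lam mud a bet t R hbet hR hLund psi hpsi
end

section
/- Let λ, μ_d, α, β, t > 0, let R ∈ (0, α) solve λβ/(β+R) + μ_dα/(α−R) = λ + μ_d + 1/t, and set d₀ = t(λ/β − μ_d/α). Then the function V(u) = (1/α² − d₀/α)(α − R) e^{−Ru} + u + d₀ satisfies λ ∫₀^∞ V(u+b) β e^{−βb} db − (λ + μ_d + 1/t) V(u) + μ_d ∫₀^u V(u−w) α e^{−αw} dw + u/t = 0 for all u ≥ 0. -/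
/-!
Both integrands are sums of terms `(p + q x) e^{c x}`, which have the explicit primitive
`((p + q x)/c - q/c²) e^{c x}`. Integrating, the left-hand side becomes a combination of
`e^{-R u}`, `e^{-α u}`, `u` and `1`: the `u`-terms cancel identically, the coefficient of
`e^{-R u}` is the Lundberg equation, and the choice of the constant `(1/α² - d₀/α)(α - R)`
and of `d₀` kills the coefficients of `e^{-α u}` and of `1`.
-/

open Real MeasureTheory Filter Set

lemma hasDerivAt_affine_mul_exp {c : ℝ} (hc : c ≠ 0) (p q x : ℝ) :
    HasDerivAt (fun y => ((p + q * y) / c - q / c ^ 2) * exp (c * y))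
      ((p + q * x) * exp (c * x)) x := by
  have h := (((((hasDerivAt_id x).const_mul q).const_add p).div_const c).sub_const
    (q / c ^ 2)).mul ((hasDerivAt_id x).const_mul c).exp
  refine h.congr_deriv ?_
  simp only [id]
  field_simp
  ring

lemma integral_affine_mul_exp {c : ℝ} (hc : c ≠ 0) (p q a b : ℝ) :
    ∫ x in a..b, (p + q * x) * exp (c * x) =
      ((p + q * b) / c - q / c ^ 2) * exp (c * b) -
        ((p + q * a) / c - q / c ^ 2) * exp (c * a) :=
  intervalIntegral.integral_eq_sub_of_hasDerivAt
    (fun x _ => hasDerivAt_affine_mul_exp hc p q x)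
    (by apply Continuous.intervalIntegrable; fun_prop)

lemma integrableOn_Ioi_affine_mul_exp {c : ℝ} (hc : c < 0) (p q : ℝ) :
    IntegrableOn (fun x => (p + q * x) * exp (c * x)) (Ioi 0) := by
  have hexp : IntegrableOn (fun x => exp (c * x)) (Ioi 0) := by
    simpa using exp_neg_integrableOn_Ioi 0 (neg_pos.mpr hc)
  have hmul : IntegrableOn (fun x => x * exp (c * x)) (Ioi 0) := by
    simpa using integrableOn_rpow_mul_exp_neg_mul_rpow (s := 1) (p := 1) (by norm_num)
      one_pos (neg_pos.mpr hc)
  refine IntegrableOn.congr_fun ((hexp.const_mul p).add (hmul.const_mul q))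
    (fun x _ => by simp only [Pi.add_apply]; ring) measurableSet_Ioi

lemma tendsto_affine_mul_exp_atTop {c : ℝ} (hc : c < 0) (p q : ℝ) :
    Tendsto (fun x => (p + q * x) * exp (c * x)) atTop (nhds 0) := by
  have hexp : Tendsto (fun x => exp (c * x)) atTop (nhds 0) :=
    tendsto_exp_atBot.comp (tendsto_id.const_mul_atTop_of_neg hc)
  have hmul : Tendsto (fun x => x * exp (c * x)) atTop (nhds 0) := by
    have h := ((tendsto_pow_mul_exp_neg_atTop_nhds_zero 1).comp
      (tendsto_id.const_mul_atTop (neg_pos.mpr hc))).const_mul (-c)⁻¹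
    rw [mul_zero] at h
    refine h.congr fun x => ?_
    simp only [Function.comp_apply, id, pow_one]
    field_simp [hc.ne]
  simpa [add_mul, mul_assoc] using (hexp.const_mul p).add (hmul.const_mul q)

lemma integral_Ioi_affine_mul_exp {c : ℝ} (hc : c < 0) (p q : ℝ) :
    ∫ x in Ioi 0, (p + q * x) * exp (c * x) = q / c ^ 2 - p / c := by
  have hlim : Tendsto (fun y => ((p + q * y) / c - q / c ^ 2) * exp (c * y)) atTop (nhds 0) := by
    refine (tendsto_affine_mul_exp_atTop hc (p / c - q / c ^ 2) (q / c)).congr fun y => ?_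
    ring
  rw [integral_Ioi_of_hasDerivAt_of_tendsto' (fun x _ => hasDerivAt_affine_mul_exp hc.ne p q x)
    (integrableOn_Ioi_affine_mul_exp hc p q) hlim]
  simp only [mul_zero, add_zero, exp_zero, mul_one]
  ring

noncomputable def expAffine (C R d x : ℝ) : ℝ := C * exp (-R * x) + x + d

lemma integral_Ioi_expAffine_add_mul_exp {β R : ℝ} (hβ : 0 < β) (hβR : 0 < β + R)
    (C d u : ℝ) :
    ∫ b in Ioi 0, expAffine C R d (u + b) * (β * exp (-β * b)) =
      C * exp (-R * u) * (β / (β + R)) + (u + d + 1 / β) := by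
  have hsplit : ∀ b, expAffine C R d (u + b) * (β * exp (-β * b)) =
      (C * β * exp (-R * u) + 0 * b) * exp (-(β + R) * b)
        + (β * (u + d) + β * b) * exp (-β * b) := by
    intro b
    have hexp : exp (-R * (u + b)) * exp (-β * b) = exp (-R * u) * exp (-(β + R) * b) := by
      rw [← exp_add, ← exp_add]; ring_nf
    unfold expAffine
    linear_combination C * β * hexp
  have hβR' : -(β + R) < 0 := by linarith
  have hβ' : -β < 0 := by linarith
  simp_rw [hsplit]
  rw [integral_add (integrableOn_Ioi_affine_mul_exp hβR' _ _)
    (integrableOn_Ioi_affine_mul_exp hβ' _ _), integral_Ioi_affine_mul_exp hβR',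
    integral_Ioi_affine_mul_exp hβ']
  field_simp
  ring

lemma integral_expAffine_sub_mul_exp {α R : ℝ} (hα : α ≠ 0) (hRα : R ≠ α) (C d u : ℝ) :
    ∫ w in (0 : ℝ)..u, expAffine C R d (u - w) * (α * exp (-α * w)) =
      C * (α / (α - R)) * (exp (-R * u) - exp (-α * u)) + (1 / α - d) * exp (-α * u)
        + (u + d - 1 / α) := by
  have hsplit : ∀ w, expAffine C R d (u - w) * (α * exp (-α * w)) =
      (C * α * exp (-R * u) + 0 * w) * exp ((R - α) * w)
        + (α * (u + d) + -α * w) * exp (-α * w) := by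
    intro w
    have hexp : exp (-R * (u - w)) * exp (-α * w) = exp (-R * u) * exp ((R - α) * w) := by
      rw [← exp_add, ← exp_add]; ring_nf
    unfold expAffine
    linear_combination C * α * hexp
  have hexp : exp (-R * u) * exp ((R - α) * u) = exp (-α * u) := by
    rw [← exp_add]; ring_nf
  simp_rw [hsplit]
  rw [intervalIntegral.integral_add (by apply Continuous.intervalIntegrable; fun_prop)
    (by apply Continuous.intervalIntegrable; fun_prop),
    integral_affine_mul_exp (sub_ne_zero.mpr hRα), integral_affine_mul_exp (neg_ne_zero.mpr hα)]
  simp only [mul_zero, exp_zero]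
  linear_combination (norm := skip) C * α / (R - α) * hexp
  field_simp
  ring

theorem stmt8_general (lam mud a bet t R : ℝ)
    (ha : 0 < a) (hbet : 0 < bet) (ht : 0 < t) (hR : R ∈ Set.Ioo 0 a)
    (hLund : lam * bet / (bet + R) + mud * a / (a - R) = lam + mud + 1 / t)
    (d0 : ℝ) (hd0 : d0 = t * (lam / bet - mud / a))
    (V : ℝ → ℝ) (hV : ∀ u : ℝ, V u = (1 / a ^ 2 - d0 / a) * (a - R) * Real.exp (-R * u) + u + d0) :
    ∀ u : ℝ, 0 ≤ u →
      lam * (∫ b in Set.Ioi (0 : ℝ), V (u + b) * (bet * Real.exp (-bet * b)))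
        - (lam + mud + 1 / t) * V u
        + mud * (∫ w in (0 : ℝ)..u, V (u - w) * (a * Real.exp (-a * w)))
        + u / t = 0 := by
  intro u _
  obtain ⟨C, hC⟩ : ∃ C, C = (1 / a ^ 2 - d0 / a) * (a - R) := ⟨_, rfl⟩
  rw [← hC] at hV
  obtain rfl : V = expAffine C R d0 := funext hV
  rw [integral_Ioi_expAffine_add_mul_exp hbet (by linarith [hR.1]),
    integral_expAffine_sub_mul_exp ha.ne' hR.2.ne]
  have haR : a - R ≠ 0 := sub_ne_zero.mpr hR.2.ne'
  have hcoeff : C * (a / (a - R)) = 1 / a - d0 := by rw [hC]; field_simp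
  have hconst : lam / bet - mud / a - d0 / t = 0 := by rw [hd0]; field_simp; ring
  unfold expAffine
  linear_combination C * exp (-R * u) * hLund - mud * exp (-a * u) * hcoeff + hconst

theorem stmt8 (lam mud a bet t R : ℝ) (hlam : 0 < lam) (hmud : 0 < mud)
    (ha : 0 < a) (hbet : 0 < bet) (ht : 0 < t) (hR : R ∈ Set.Ioo 0 a)
    (hLund : lam * bet / (bet + R) + mud * a / (a - R) = lam + mud + 1 / t)
    (d0 : ℝ) (hd0 : d0 = t * (lam / bet - mud / a))
    (V : ℝ → ℝ) (hV : ∀ u : ℝ, V u = (1 / a ^ 2 - d0 / a) * (a - R) * Real.exp (-R * u) + u + d0) :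
    ∀ u : ℝ, 0 ≤ u →
      lam * (∫ b in Set.Ioi (0 : ℝ), V (u + b) * (bet * Real.exp (-bet * b)))
        - (lam + mud + 1 / t) * V u
        + mud * (∫ w in (0 : ℝ)..u, V (u - w) * (a * Real.exp (-a * w)))
        + u / t = 0 :=
  stmt8_general lam mud a bet t R ha hbet ht hR hLund d0 hd0 V hV
end

section
/- Let c, p, μ, t > 0, let α_1, ..., α_n > 0 be distinct, and A_1, ..., A_n real with Σ A_j = 1 and Σ A_j α_j e^{−α_j w} ≥ 0 for all w > 0 (so f_W(w) = Σ A_j α_j e^{−α_j w} is a probability density). Suppose R > 0 satisfies cR + pμ Σ_j A_j α_j/(R + α_j) − (1/t + pμ) = 0, and set d₀ = t(pμ Σ_j A_j/α_j − c). Then V(u) = −d₀ e^{−Ru} + u + d₀ satisfies the integro-differential equation c V′(u) + (1/t + pμ) V(u) − pμ ∫₀^∞ V(u + w) f_W(w) dw − u/t = 0 for all u ≥ 0, together with the boundary condition V(0) = 0. -/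
open Real MeasureTheory

/-!
For the mixture density `f(w) = ∑ Aⱼ αⱼ e^{-αⱼ w}` everything is explicit:
`∫₀^∞ e^{-s w} f(w) dw = ∑ Aⱼ αⱼ / (s + αⱼ)` for `s ≥ 0` (total mass `∑ Aⱼ = 1` at `s = 0`) and
`∫₀^∞ w f(w) dw = ∑ Aⱼ / αⱼ`. Hence `∫ V(u + w) f(w) dw` is again of the form
`a e^{-R u} + u + b`, and the integro-differential equation reduces to comparing coefficients:
that of `e^{-R u}` vanishes by the Lundberg equation for `R`, that of `u` identically, and the
constant term by the choice of `d₀`.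
-/

lemma integral_exp_neg_mul_Ioi_zero {b : ℝ} (hb : 0 < b) :
    ∫ w in Set.Ioi (0 : ℝ), exp (-b * w) = 1 / b := by
  rw [integral_exp_mul_Ioi (neg_lt_zero.mpr hb)]
  simp [div_neg, neg_div]

lemma integrableOn_mul_exp_neg_mul_Ioi_zero {b : ℝ} (hb : 0 < b) :
    IntegrableOn (fun w : ℝ => w * exp (-b * w)) (Set.Ioi 0) := by
  refine (integrableOn_rpow_mul_exp_neg_mul_rpow (s := 1) (p := 1) (by norm_num) one_pos
    hb).congr_fun (fun w _ => ?_) measurableSet_Ioi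
  simp only [rpow_one, neg_mul]

lemma integral_mul_exp_neg_mul_Ioi_zero {b : ℝ} (hb : 0 < b) :
    ∫ w in Set.Ioi (0 : ℝ), w * exp (-b * w) = 1 / b ^ 2 := by
  have h := integral_rpow_mul_exp_neg_mul_Ioi two_pos hb
  norm_num [Gamma_two] at h
  simpa [neg_mul] using h

section expMixture

variable {ι : Type*} [Fintype ι] {A α : ι → ℝ}

variable (A α) in
noncomputable def expMixture (w : ℝ) : ℝ := ∑ j, A j * α j * exp (-α j * w)

lemma exp_mul_expMixture (s w : ℝ) :
    exp (-s * w) * expMixture A α w = ∑ j, A j * α j * exp (-(s + α j) * w) := by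
  simp only [expMixture, Finset.mul_sum]
  refine Finset.sum_congr rfl fun j _ => ?_
  rw [show -(s + α j) * w = -s * w + -α j * w by ring, exp_add]
  ring

lemma integrableOn_exp_mul_expMixture (hα : ∀ j, 0 < α j) {s : ℝ} (hs : 0 ≤ s) :
    IntegrableOn (fun w => exp (-s * w) * expMixture A α w) (Set.Ioi 0) := by
  simp only [exp_mul_expMixture]
  exact integrable_finsetSum _ fun j _ =>
    (integrableOn_exp_mul_Ioi (by linarith [hα j]) 0).const_mul _

lemma integral_exp_mul_expMixture (hα : ∀ j, 0 < α j) {s : ℝ} (hs : 0 ≤ s) :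
    ∫ w in Set.Ioi 0, exp (-s * w) * expMixture A α w = ∑ j, A j * α j / (s + α j) := by
  simp only [exp_mul_expMixture]
  rw [integral_finsetSum _ fun j _ =>
    (integrableOn_exp_mul_Ioi (by linarith [hα j]) 0).const_mul _]
  refine Finset.sum_congr rfl fun j _ => ?_
  rw [integral_const_mul, integral_exp_neg_mul_Ioi_zero (by linarith [hα j]), mul_one_div]

lemma integrableOn_expMixture (hα : ∀ j, 0 < α j) :
    IntegrableOn (expMixture A α) (Set.Ioi 0) := by
  simpa using integrableOn_exp_mul_expMixture hα le_rfl

lemma integral_expMixture (hα : ∀ j, 0 < α j) :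
    ∫ w in Set.Ioi 0, expMixture A α w = ∑ j, A j := by
  have h := integral_exp_mul_expMixture (A := A) hα le_rfl
  simp only [neg_zero, zero_mul, exp_zero, one_mul, zero_add] at h
  rw [h]
  exact Finset.sum_congr rfl fun j _ => mul_div_cancel_right₀ _ (hα j).ne'

lemma mul_expMixture (w : ℝ) :
    w * expMixture A α w = ∑ j, A j * α j * (w * exp (-α j * w)) := by
  simp only [expMixture, Finset.mul_sum]
  exact Finset.sum_congr rfl fun j _ => by ring

lemma integrableOn_mul_expMixture (hα : ∀ j, 0 < α j) :
    IntegrableOn (fun w => w * expMixture A α w) (Set.Ioi 0) := by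
  simp only [mul_expMixture]
  exact integrable_finsetSum _ fun j _ =>
    (integrableOn_mul_exp_neg_mul_Ioi_zero (hα j)).const_mul _

lemma integral_mul_expMixture (hα : ∀ j, 0 < α j) :
    ∫ w in Set.Ioi 0, w * expMixture A α w = ∑ j, A j / α j := by
  simp only [mul_expMixture]
  rw [integral_finsetSum _ fun j _ =>
    (integrableOn_mul_exp_neg_mul_Ioi_zero (hα j)).const_mul _]
  refine Finset.sum_congr rfl fun j _ => ?_
  rw [integral_const_mul, integral_mul_exp_neg_mul_Ioi_zero (hα j)]
  field_simp [(hα j).ne']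

lemma integral_shifted_mul_expMixture (hα : ∀ j, 0 < α j) {R : ℝ} (hR : 0 ≤ R)
    (a b u : ℝ) :
    ∫ w in Set.Ioi 0, (a * exp (-R * (u + w)) + (u + w) + b) * expMixture A α w
      = a * exp (-R * u) * ∑ j, A j * α j / (R + α j) + (u + b) * ∑ j, A j
        + ∑ j, A j / α j := by
  have hsplit : ∀ w, (a * exp (-R * (u + w)) + (u + w) + b) * expMixture A α w
      = a * exp (-R * u) * (exp (-R * w) * expMixture A α w)
        + (u + b) * expMixture A α w + w * expMixture A α w := by
    intro w
    rw [show -R * (u + w) = -R * u + -R * w by ring, exp_add]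
    ring
  have hexp := (integrableOn_exp_mul_expMixture (A := A) hα hR).const_mul (a * exp (-R * u))
  have hconst := (integrableOn_expMixture (A := A) hα).const_mul (u + b)
  simp only [hsplit]
  rw [integral_add ?_ (integrableOn_mul_expMixture hα), integral_add hexp hconst,
    integral_const_mul, integral_const_mul, integral_exp_mul_expMixture hα hR,
    integral_expMixture hα, integral_mul_expMixture hα]
  exact hexp.add hconst

end expMixture

lemma hasDerivAt_exp_neg_mul_add_id (a b R u : ℝ) :
    HasDerivAt (fun x => a * exp (-R * x) + x + b) (-a * R * exp (-R * u) + 1) u := by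
  have h := (((hasDerivAt_id' u).const_mul (-R)).exp.const_mul a).add (hasDerivAt_id' u)
  exact (h.add_const b).congr_deriv (by ring)

theorem stmt11_general (c p mu t : ℝ) (ht : 0 < t)
    (n : ℕ) (α : Fin n → ℝ) (A : Fin n → ℝ)
    (hα : ∀ j, 0 < α j)
    (hA : ∑ j, A j = 1)
    (fW : ℝ → ℝ) (hfW : ∀ w : ℝ, fW w = ∑ j, A j * α j * Real.exp (-(α j) * w))
    (R : ℝ) (hRpos : 0 < R)
    (hLund : c * R + p * mu * (∑ j, A j * α j / (R + α j)) - (1 / t + p * mu) = 0)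
    (d0 : ℝ) (hd0 : d0 = t * (p * mu * (∑ j, A j / α j) - c))
    (V : ℝ → ℝ) (hV : ∀ u : ℝ, V u = -d0 * Real.exp (-R * u) + u + d0) :
    V 0 = 0 ∧
      ∀ u : ℝ, 0 ≤ u →
        c * deriv V u + (1 / t + p * mu) * V u
          - p * mu * (∫ w in Set.Ioi (0 : ℝ), V (u + w) * fW w) - u / t = 0 := by
  obtain rfl : fW = expMixture A α := funext hfW
  obtain rfl : V = fun u => -d0 * exp (-R * u) + u + d0 := funext hV
  refine ⟨by simp, fun u _ => ?_⟩
  rw [(hasDerivAt_exp_neg_mul_add_id _ _ _ u).deriv,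
    integral_shifted_mul_expMixture hα hRpos.le, hA]
  have hdrift : p * mu * ∑ j, A j / α j - c = d0 / t := by
    rw [hd0]; field_simp
  linear_combination d0 * exp (-R * u) * hLund - hdrift

theorem stmt11 (c p mu t : ℝ) (hc : 0 < c) (hp : 0 < p) (hmu : 0 < mu) (ht : 0 < t)
    (n : ℕ) (hn : 0 < n) (α : Fin n → ℝ) (A : Fin n → ℝ)
    (hα : ∀ j, 0 < α j) (hαinj : Function.Injective α)
    (hA : ∑ j, A j = 1)
    (fW : ℝ → ℝ) (hfW : ∀ w : ℝ, fW w = ∑ j, A j * α j * Real.exp (-(α j) * w))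
    (hdens : ∀ w : ℝ, 0 < w → 0 ≤ fW w)
    (R : ℝ) (hRpos : 0 < R)
    (hLund : c * R + p * mu * (∑ j, A j * α j / (R + α j)) - (1 / t + p * mu) = 0)
    (d0 : ℝ) (hd0 : d0 = t * (p * mu * (∑ j, A j / α j) - c))
    (V : ℝ → ℝ) (hV : ∀ u : ℝ, V u = -d0 * Real.exp (-R * u) + u + d0) :
    V 0 = 0 ∧
      ∀ u : ℝ, 0 ≤ u →
        c * deriv V u + (1 / t + p * mu) * V u
          - p * mu * (∫ w in Set.Ioi (0 : ℝ), V (u + w) * fW w) - u / t = 0 :=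
  stmt11_general c p mu t ht n α A hα hA fW hfW R hRpos hLund d0 hd0 V hV
end

section
/- Let U_{1:n} ≤ ⋯ ≤ U_{n:n} be the order statistics of n i.i.d. uniform random variables on (0,1). For 0 ≤ x ≤ u_1 ≤ u_2 ≤ ⋯ ≤ u_n ≤ 1, the probability P[U_{1:n} ≥ x and U_{k:n} ≤ u_k for all k = 1, ..., n] equals (−1)ⁿ G_n(x | u_1, ..., u_n), where G_n is the Abel-Gontcharov polynomial attached to the sequence (u_1, ..., u_n). -/
/-!
Both sides satisfy the same recursion in `n`. Splitting the cube according to the first index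
at which the smallest coordinate `t` is attained, the event for `n + 1` points becomes
`t ∈ [x, u₁]` together with the event for the remaining `n` points, with lower bound `t` and
boundary `(u₂, …, u_{n+1})`; hence `Pₙ₊₁(x | u) = (n + 1) ∫ₓ^{u₁} Pₙ(t | u₂, …) dt`. On the other
side `G'ₙ₊₁(· | u) = (n + 1) Gₙ(· | u₂, …)` and `Gₙ₊₁(u₁ | u) = 0`, which is the same recursion up
to the sign `(-1)ⁿ`.
-/

/-- Abel-Gontcharov polynomials attached to the sequence `U` (with `u₁ = U 0`),
defined by `G₀ = 1` and the recursion
`Gₙ(x|U) = xⁿ − Σ_{k<n} C(n,k) u_{k+1}^{n−k} G_k(x|U)`. -/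
noncomputable def AG (U : ℕ → ℝ) : ℕ → ℝ → ℝ
  | 0, _ => 1
  | (n + 1), x => x ^ (n + 1) -
      ∑ k : Fin (n + 1), ((n + 1).choose k : ℝ) * U k ^ (n + 1 - (k : ℕ)) * AG U k x
  termination_by n => n
  decreasing_by exact k.isLt

open MeasureTheory Finset

@[simp] lemma AG_zero (U : ℕ → ℝ) (x : ℝ) : AG U 0 x = 1 := by rw [AG]

lemma AG_eq_pow_sub_sum (U : ℕ → ℝ) (n : ℕ) (x : ℝ) :
    AG U n x = x ^ n - ∑ k ∈ range n, (n.choose k : ℝ) * U k ^ (n - k) * AG U k x := by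
  cases n with
  | zero => simp
  | succ n =>
    rw [AG, Fin.sum_univ_eq_sum_range
      (fun k => ((n + 1).choose k : ℝ) * U k ^ (n + 1 - k) * AG U k x)]

lemma continuous_AG (U : ℕ → ℝ) (n : ℕ) : Continuous (AG U n) := by
  induction n using Nat.strong_induction_on with
  | _ n ih =>
    rw [funext (AG_eq_pow_sub_sum U n)]
    exact (continuous_pow n).sub <| continuous_finsetSum _ fun k hk =>
      continuous_const.mul (ih k (mem_range.1 hk))

lemma AG_succ_at_head (U : ℕ → ℝ) (n : ℕ) : AG U (n + 1) (U 0) = 0 := by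
  induction n using Nat.strong_induction_on with
  | _ n ih =>
    rw [AG_eq_pow_sub_sum, sum_range_succ',
      sum_eq_zero fun k hk => by rw [ih k (mem_range.1 hk), mul_zero]]
    simp

lemma hasDerivAt_AG (U : ℕ → ℝ) (n : ℕ) (x : ℝ) :
    HasDerivAt (AG U n) (n * AG (fun k => U (k + 1)) (n - 1) x) x := by
  induction n using Nat.strong_induction_on generalizing x with
  | _ n ih =>
    rw [funext (AG_eq_pow_sub_sum U n)]
    refine ((hasDerivAt_pow n x).sub <| HasDerivAt.fun_sum fun k hk =>
      (ih k (mem_range.1 hk) x).const_mul ((n.choose k : ℝ) * U k ^ (n - k))).congr_deriv ?_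
    rcases n with _ | n
    · simp
    simp only [sum_range_succ', Nat.cast_zero, zero_mul, mul_zero, add_zero, Nat.cast_add_one,
      Nat.add_sub_cancel, Nat.add_sub_add_right]
    rw [AG_eq_pow_sub_sum (fun k => U (k + 1)) n x, mul_sub, mul_sum]
    congr 1
    refine sum_congr rfl fun k _ => ?_
    have hchoose : ((n + 1).choose (k + 1) : ℝ) * (k + 1) = (n + 1) * n.choose k := by
      exact_mod_cast (Nat.add_one_mul_choose_eq n k).symm
    linear_combination (U (k + 1) ^ (n - k) * AG (fun j => U (j + 1)) k x) * hchoose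

lemma AG_succ_eq_neg_integral (U : ℕ → ℝ) (n : ℕ) (x : ℝ) :
    AG U (n + 1) x = -((n + 1) * ∫ t in x..U 0, AG (fun k => U (k + 1)) n t) := by
  have hFTC := intervalIntegral.integral_eq_sub_of_hasDerivAt (a := x) (b := U 0)
    (fun t _ => hasDerivAt_AG U (n + 1) t)
    ((continuous_const.mul (continuous_AG _ n)).intervalIntegrable _ _)
  simp only [Nat.cast_add_one, Nat.add_sub_cancel, intervalIntegral.integral_const_mul,
    AG_succ_at_head] at hFTC
  linarith

lemma monotoneOn_shift {U : ℕ → ℝ} {n : ℕ} (hU : MonotoneOn U (Set.Iio (n + 1))) :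
    MonotoneOn (fun k => U (k + 1)) (Set.Iio n) := fun i hi j hj hij =>
  hU (by simp at hi ⊢; omega) (by simp at hj ⊢; omega) (by omega)

lemma le_shift_of_le_head {U : ℕ → ℝ} {n : ℕ} {t : ℝ}
    (hU : MonotoneOn U (Set.Iio (n + 1))) (ht : t ≤ U 0) : ∀ k < n, t ≤ U (k + 1) :=
  fun k hk => ht.trans (hU (by simp) (by simp; omega) (by omega))

lemma neg_one_pow_mul_AG_nonneg (U : ℕ → ℝ) (n : ℕ) (x : ℝ) (hxU : ∀ k < n, x ≤ U k)
    (hU : MonotoneOn U (Set.Iio n)) : 0 ≤ (-1) ^ n * AG U n x := by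
  induction n generalizing U x with
  | zero => simp
  | succ n ih =>
    have hI := intervalIntegral.integral_nonneg (μ := volume) (hxU 0 n.succ_pos) fun t ht =>
      ih (fun k => U (k + 1)) t (le_shift_of_le_head hU ht.2) (monotoneOn_shift hU)
    rw [intervalIntegral.integral_const_mul] at hI
    rw [AG_succ_eq_neg_integral, show ∀ a b : ℝ, (-1) ^ (n + 1) * -(a * b) = a * ((-1) ^ n * b) by
      intros; ring]
    exact mul_nonneg (by positivity) hI

section UniformOrderStatistics

variable {n : ℕ}

noncomputable def countLE (c : ℝ) (y : Fin n → ℝ) : ℕ := #{i | y i ≤ c}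

/-- `y_(k) ≤ U k` is encoded as `k < countLE (U k) y` (`sort_le_iff_lt_countLE`), which avoids
sorting. -/
def boundaryEvent (n : ℕ) (U : ℕ → ℝ) (x : ℝ) : Set (Fin n → ℝ) :=
  {y | (∀ i, x ≤ y i) ∧ ∀ k : Fin n, (k : ℕ) < countLE (U k) y}

def firstArgminSet (i : Fin (n + 1)) : Set (Fin (n + 1) → ℝ) :=
  {y | (∀ j < i, y i < y j) ∧ ∀ j, y i ≤ y j}

noncomputable abbrev uniformPi (n : ℕ) : Measure (Fin n → ℝ) :=
  Measure.pi fun _ => volume.restrict (Set.Ioo (0 : ℝ) 1)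

lemma measurable_countLE (c : ℝ) : Measurable (countLE (n := n) c) := by
  rw [show countLE (n := n) c = fun y => ∑ i, if y i ≤ c then 1 else 0 from
    funext fun y => card_filter _ _]
  exact Finset.measurable_sum _ fun i _ =>
    measurable_const.ite (measurableSet_le (measurable_pi_apply i) measurable_const)
      measurable_const

lemma countLE_insertNth (i : Fin (n + 1)) (t c : ℝ) (z : Fin n → ℝ) :
    countLE c (i.insertNth t z) = (if t ≤ c then 1 else 0) + countLE c z := by
  rw [countLE, countLE, card_filter, card_filter, Fin.sum_univ_succAbove _ i]
  simp

lemma measurableSet_boundaryEvent (n : ℕ) (U : ℕ → ℝ) (x : ℝ) :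
    MeasurableSet (boundaryEvent n U x) := by
  simp only [boundaryEvent, Set.ofPred_and, Set.ofPred_forall]
  exact (MeasurableSet.iInter fun i =>
      measurableSet_le measurable_const (measurable_pi_apply i)).inter
    (MeasurableSet.iInter fun k => measurable_countLE (U k) measurableSet_Ioi)

lemma measurableSet_firstArgminSet (i : Fin (n + 1)) : MeasurableSet (firstArgminSet i) := by
  simp only [firstArgminSet, Set.ofPred_and, Set.ofPred_forall]
  exact (MeasurableSet.iInter fun j => MeasurableSet.iInter fun _ =>
      measurableSet_lt (measurable_pi_apply i) (measurable_pi_apply j)).inter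
    (MeasurableSet.iInter fun j =>
      measurableSet_le (measurable_pi_apply i) (measurable_pi_apply j))

lemma iUnion_firstArgminSet : ⋃ i : Fin (n + 1), firstArgminSet i = Set.univ := by
  refine Set.eq_univ_of_forall fun y => Set.mem_iUnion.2 ?_
  obtain ⟨i, -, hi⟩ := exists_min_image univ (fun i => toLex (y i, i)) univ_nonempty
  refine ⟨i, fun j hj => ?_, fun j => ?_⟩ <;>
    rcases Prod.Lex.le_iff.1 (hi j (mem_univ j)) with h | ⟨h, h'⟩
  all_goals first | exact h.le | exact h.ge | exact h | exact absurd h' (not_le.2 hj)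

lemma pairwise_disjoint_firstArgminSet :
    Pairwise (Function.onFun Disjoint (firstArgminSet (n := n))) := by
  intro i i' hne
  refine Set.disjoint_left.2 fun y ⟨h1, h2⟩ ⟨h1', h2'⟩ => ?_
  rcases hne.lt_or_gt with h | h
  · exact (h2 i').not_gt (h1' i h)
  · exact (h2' i).not_gt (h1 i' h)

lemma insertNth_mem_firstArgminSet_iff (i : Fin (n + 1)) {t : ℝ} {z : Fin n → ℝ}
    (hz : ∀ j, z j ≠ t) : i.insertNth t z ∈ firstArgminSet i ↔ ∀ j, t ≤ z j := by
  simp only [firstArgminSet, Set.mem_ofPred_eq, Fin.forall_iff_succAbove i, lt_self_iff_false,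
    le_refl, Fin.insertNth_apply_same, Fin.insertNth_apply_succAbove]
  exact ⟨fun h j => h.2.2 j,
    fun h => ⟨⟨fun h => h.elim, fun j _ => (h j).lt_of_ne (hz j).symm⟩, trivial, h⟩⟩

lemma insertNth_mem_boundaryEvent_iff {U : ℕ → ℝ} (hU : MonotoneOn U (Set.Iio (n + 1)))
    (i : Fin (n + 1)) {x t : ℝ} {z : Fin n → ℝ} (hz : ∀ j, t ≤ z j) :
    i.insertNth t z ∈ boundaryEvent (n + 1) U x ↔
      t ∈ Set.Icc x (U 0) ∧ z ∈ boundaryEvent n (fun k => U (k + 1)) t := by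
  have hbelow : (∀ j, x ≤ (i.insertNth t z : Fin (n + 1) → ℝ) j) ↔ x ≤ t := by
    simp only [Fin.forall_iff_succAbove i, Fin.insertNth_apply_same,
      Fin.insertNth_apply_succAbove]
    exact ⟨And.left, fun h => ⟨h, fun j => h.trans (hz j)⟩⟩
  have hhead : t ≤ U 0 ↔ 0 < countLE (U 0) (i.insertNth t z) := by
    rw [countLE_insertNth]
    refine ⟨fun h => by simp [h], fun h => not_lt.1 fun hlt => ?_⟩
    have : countLE (U 0) z = 0 :=
      card_eq_zero.2 (filter_eq_empty_iff.2 fun j _ => not_le.2 (hlt.trans_le (hz j)))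
    simp [not_le.2 hlt, this] at h
  simp only [boundaryEvent, Set.mem_ofPred_eq, Set.mem_Icc]
  rw [hbelow, Fin.forall_fin_succ, Fin.val_zero, ← hhead]
  simp only [Fin.val_succ, countLE_insertNth, hz, implies_true, true_and]
  refine ⟨fun ⟨hx, ht, h⟩ => ⟨⟨hx, ht⟩, fun k => ?_⟩, fun ⟨⟨hx, ht⟩, h⟩ => ⟨hx, ht, fun k => ?_⟩⟩
  all_goals
    have := le_shift_of_le_head hU ht k k.isLt
    grind

lemma uniformPi_exists_eq_null (t : ℝ) : uniformPi n {z | ∀ j, z j ≠ t}ᶜ = 0 := by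
  have : {z : Fin n → ℝ | ∀ j, z j ≠ t}ᶜ = ⋃ j, Function.eval j ⁻¹' {t} := by ext; simp
  rw [this, measure_iUnion_null_iff]
  exact fun j => Measure.pi_eval_preimage_null _ (measure_singleton t)

/-- Off the null set of ties `z j = t`, the slice is exactly the event for the remaining
coordinates. -/
lemma uniformPi_slice {U : ℕ → ℝ} (hU : MonotoneOn U (Set.Iio (n + 1))) (i : Fin (n + 1))
    (x t : ℝ) :
    uniformPi n {z | i.insertNth t z ∈ boundaryEvent (n + 1) U x ∩ firstArgminSet i} =
      (Set.Icc x (U 0)).indicator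
        (fun s => uniformPi n (boundaryEvent n (fun k => U (k + 1)) s)) t := by
  have hnull := uniformPi_exists_eq_null (n := n) t
  have hslice : {z | i.insertNth t z ∈ boundaryEvent (n + 1) U x ∩ firstArgminSet i} ∩
      {z | ∀ j, z j ≠ t} =
      {z | t ∈ Set.Icc x (U 0) ∧ z ∈ boundaryEvent n (fun k => U (k + 1)) t} ∩
      {z | ∀ j, z j ≠ t} := by
    ext z
    simp only [Set.mem_inter_iff, Set.mem_ofPred_eq, and_congr_left_iff]
    intro hz
    rw [insertNth_mem_firstArgminSet_iff i hz]
    exact ⟨fun ⟨h, hmin⟩ => (insertNth_mem_boundaryEvent_iff hU i hmin).1 h,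
      fun h => ⟨(insertNth_mem_boundaryEvent_iff hU i h.2.1).2 h, h.2.1⟩⟩
  rw [← measure_inter_conull hnull, hslice]
  by_cases ht : t ∈ Set.Icc x (U 0)
  · simp [ht, measure_inter_conull hnull]
  · simp [ht]

lemma restrict_Ioo_restrict_Icc {a b : ℝ} (ha : 0 ≤ a) (hb : b ≤ 1) :
    (volume.restrict (Set.Ioo (0 : ℝ) 1)).restrict (Set.Icc a b) =
      volume.restrict (Set.Icc a b) := by
  rw [Measure.restrict_restrict measurableSet_Icc,
    Measure.restrict_congr_set ((Filter.EventuallyEq.refl _ _).inter Ioo_ae_eq_Icc),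
    Set.inter_eq_left.2 (Set.Icc_subset_Icc ha hb)]

lemma uniformPi_boundaryEvent_inter_firstArgminSet {U : ℕ → ℝ}
    (hU : MonotoneOn U (Set.Iio (n + 1))) {x : ℝ} (hx : 0 ≤ x) (hU1 : U 0 ≤ 1)
    (i : Fin (n + 1)) :
    uniformPi (n + 1) (boundaryEvent (n + 1) U x ∩ firstArgminSet i) =
      ∫⁻ t in Set.Icc x (U 0), uniformPi n (boundaryEvent n (fun k => U (k + 1)) t) := by
  have hmp := (measurePreserving_piFinSuccAbove
    (fun _ : Fin (n + 1) => volume.restrict (Set.Ioo (0 : ℝ) 1)) i).symm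
  have hA := (measurableSet_boundaryEvent _ U x).inter (measurableSet_firstArgminSet i)
  rw [uniformPi, ← hmp.measure_preimage_equiv, Measure.prod_apply (hmp.measurable hA),
    ← restrict_Ioo_restrict_Icc hx hU1, ← lintegral_indicator measurableSet_Icc]
  exact lintegral_congr fun t => uniformPi_slice hU i x t

lemma uniformPi_boundaryEvent_succ {U : ℕ → ℝ}
    (hU : MonotoneOn U (Set.Iio (n + 1))) {x : ℝ} (hx : 0 ≤ x) (hU1 : U 0 ≤ 1) :
    uniformPi (n + 1) (boundaryEvent (n + 1) U x) =
      (n + 1) * ∫⁻ t in Set.Icc x (U 0), uniformPi n (boundaryEvent n (fun k => U (k + 1)) t) := by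
  rw [← Set.inter_univ (boundaryEvent _ U x), ← iUnion_firstArgminSet, Set.inter_iUnion,
    measure_iUnion (fun i j hij => (pairwise_disjoint_firstArgminSet hij).mono
      Set.inter_subset_right Set.inter_subset_right)
    fun i => (measurableSet_boundaryEvent _ U x).inter (measurableSet_firstArgminSet i),
    tsum_fintype]
  simp [uniformPi_boundaryEvent_inter_firstArgminSet hU hx hU1]

lemma uniformPi_boundaryEvent (n : ℕ) (U : ℕ → ℝ) (x : ℝ) (hx : 0 ≤ x)
    (hxU : ∀ k < n, x ≤ U k) (hU : MonotoneOn U (Set.Iio n)) (hU1 : ∀ k < n, U k ≤ 1) :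
    uniformPi n (boundaryEvent n U x) = ENNReal.ofReal ((-1) ^ n * AG U n x) := by
  induction n generalizing U x with
  | zero => simp [boundaryEvent]
  | succ n ih =>
    have hx0 : x ≤ U 0 := hxU 0 n.succ_pos
    have hIH : ∀ t ∈ Set.Icc x (U 0), uniformPi n (boundaryEvent n (fun k => U (k + 1)) t) =
        ENNReal.ofReal ((-1) ^ n * AG (fun k => U (k + 1)) n t) := fun t ht =>
      ih _ t (hx.trans ht.1) (le_shift_of_le_head hU ht.2) (monotoneOn_shift hU)
        fun k hk => hU1 (k + 1) (by omega)
    have hcont : Continuous fun t => (-1) ^ n * AG (fun k => U (k + 1)) n t :=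
      continuous_const.mul (continuous_AG _ n)
    have hnonneg : ∀ᵐ t ∂volume.restrict (Set.Icc x (U 0)),
        0 ≤ (-1) ^ n * AG (fun k => U (k + 1)) n t :=
      (ae_restrict_iff' measurableSet_Icc).2 (Filter.Eventually.of_forall fun t ht =>
        neg_one_pow_mul_AG_nonneg _ n t (le_shift_of_le_head hU ht.2) (monotoneOn_shift hU))
    have hint : ∫ t in Set.Icc x (U 0), (-1) ^ n * AG (fun k => U (k + 1)) n t =
        (-1) ^ n * ∫ t in x..U 0, AG (fun k => U (k + 1)) n t := by
      rw [integral_Icc_eq_integral_Ioc, ← intervalIntegral.integral_of_le hx0,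
        intervalIntegral.integral_const_mul]
    rw [uniformPi_boundaryEvent_succ hU hx (hU1 0 n.succ_pos),
      setLIntegral_congr_fun measurableSet_Icc hIH,
      ← ofReal_integral_eq_lintegral_ofReal hcont.integrableOn_Icc hnonneg, hint,
      AG_succ_eq_neg_integral, ← ENNReal.ofReal_natCast, ← ENNReal.ofReal_one,
      ← ENNReal.ofReal_add (by positivity) zero_le_one, ← ENNReal.ofReal_mul (by positivity)]
    congr 1
    ring

lemma le_sort_zero_iff (hn : 0 < n) (y : Fin n → ℝ) (x : ℝ) :
    x ≤ y (Tuple.sort y ⟨0, hn⟩) ↔ ∀ i, x ≤ y i := by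
  refine ⟨fun h i => ?_, fun h => h _⟩
  obtain ⟨j, rfl⟩ := (Tuple.sort y).surjective i
  exact h.trans (Tuple.monotone_sort y (Fin.mk_le_of_le_val j.val.zero_le))

lemma sort_le_iff_lt_countLE (y : Fin n → ℝ) (k : Fin n) (c : ℝ) :
    y (Tuple.sort y k) ≤ c ↔ (k : ℕ) < countLE c y := by
  rw [countLE, ← card_equiv (Tuple.sort y) (t := {i | y i ≤ c})
    (s := {i | (y ∘ Tuple.sort y) i ≤ c}) (by simp)]
  exact (Tuple.lt_card_le_iff_apply_le_of_monotone (Tuple.monotone_sort y)).symm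

end UniformOrderStatistics

theorem stmt15 (n : ℕ) (hn : 0 < n) (U : ℕ → ℝ) (x : ℝ)
    (hx0 : 0 ≤ x) (hxu : x ≤ U 0)
    (hmono : ∀ i j : ℕ, i ≤ j → j < n → U i ≤ U j)
    (hub : U (n - 1) ≤ 1) :
    Measure.pi (fun _ : Fin n => volume.restrict (Set.Ioo (0 : ℝ) 1))
      {y : Fin n → ℝ |
        x ≤ y (Tuple.sort y ⟨0, hn⟩) ∧ ∀ k : Fin n, y (Tuple.sort y k) ≤ U k} =
      ENNReal.ofReal ((-1 : ℝ) ^ n * AG U n x) := by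
  have hevent : {y : Fin n → ℝ |
      x ≤ y (Tuple.sort y ⟨0, hn⟩) ∧ ∀ k : Fin n, y (Tuple.sort y k) ≤ U k} =
      boundaryEvent n U x := by
    ext y
    exact and_congr (le_sort_zero_iff hn y x)
      (forall_congr' fun k => sort_le_iff_lt_countLE y k (U k))
  rw [hevent]
  exact uniformPi_boundaryEvent n U x hx0 (fun k hk => hxu.trans (hmono 0 k k.zero_le hk))
    (fun i hi j hj hij => hmono i j hij hj)
    (fun k hk => (hmono k (n - 1) (by omega) (by omega)).trans hub)
end
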